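/- arXiv:2111.12921 — 7 statements merged into one kernel-verified Lean document; each statement's English description precedes it below -/
import Mathlib

section
/- Let n ≥ 1, let u, w ∈ ℝⁿ satisfy ‖u‖₂ = ‖w‖₂ = √n, and let s ∈ {−1, 1} be such that s · (wᵀu) ≥ 0. Define the scaled Euclidean loss L = ‖w − s·u‖₂² / n. Then ‖P_w − P_u‖₂² = L · (1 − L/4), where P_u = u uᵀ / n and P_w = w wᵀ / n are the orthogonal projections onto the spans of u and w and ‖·‖₂ is the ℓ² operator norm. -/
/-!
With `P = n⁻¹ w wᵀ` and `Q = n⁻¹ u uᵀ`, both rank-one orthogonal projections, one has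
`PQP = c P` and `QPQ = c Q` for `c = (wᵀu / n)²`, the squared cosine of the angle between `u`
and `w`. Expanding then gives `(P - Q)³ = (1 - c) (P - Q)`, and the C⋆-identity for the
self-adjoint `P - Q` turns this into `‖P - Q‖² = 1 - c`. Finally
`‖w - s u‖² / n = 2 (1 - s wᵀu / n)` with `s² = 1`, and `L (1 - L / 4) = 1 - c` is algebra.
-/

/-- The ℓ² operator norm of a real square matrix. -/
noncomputable def l2OpNorm {n : ℕ} (A : Matrix (Fin n) (Fin n) ℝ) : ℝ :=
  ‖Matrix.toEuclideanCLM (𝕜 := ℝ) A‖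

open Matrix
open scoped Matrix.Norms.L2Operator

theorem IsIdempotentElem.sub_pow_three {k R : Type*} [CommRing k] [Ring R] [Algebra k R]
    {P Q : R} (hP : IsIdempotentElem P) (hQ : IsIdempotentElem Q) {c : k}
    (hPQP : P * Q * P = c • P) (hQPQ : Q * P * Q = c • Q) :
    (P - Q) ^ 3 = (1 - c) • (P - Q) := by
  rw [show (P - Q) ^ 3 = P * P * P - P * P * Q - P * Q * P + P * (Q * Q) - Q * (P * P)
      + Q * P * Q + Q * Q * P - Q * Q * Q by noncomm_ring,
    hPQP, hQPQ, hP.eq, hQ.eq, hP.eq, hQ.eq]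
  module

section CStarRing

variable {E : Type*} [NormedRing E] [StarRing E] [CStarRing E] [NormedAlgebra ℝ E]

theorem IsSelfAdjoint.norm_sq_eq_of_pow_three_eq_smul {T : E} (hT : IsSelfAdjoint T)
    (hT0 : T ≠ 0) {μ : ℝ} (hμ : 0 ≤ μ) (h3 : T ^ 3 = μ • T) : ‖T‖ ^ 2 = μ := by
  have h4 : T ^ 4 = μ • T ^ 2 := by rw [pow_succ, h3, smul_mul_assoc, ← sq]
  have hnorm4 : ‖T ^ 4‖ = ‖T‖ ^ 4 := hT.norm_pow_two_pow 2
  have hnorm2 : ‖T ^ 2‖ = ‖T‖ ^ 2 := hT.norm_pow_two_pow 1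
  have : ‖T‖ ^ 2 * ‖T‖ ^ 2 = μ * ‖T‖ ^ 2 := by
    rw [← hnorm2, ← norm_smul_of_nonneg hμ, ← h4, hnorm2, hnorm4]; ring
  exact mul_right_cancel₀ (by positivity) this

theorem IsStarProjection.norm_sub_sq {P Q : E} (hP : IsStarProjection P)
    (hQ : IsStarProjection Q) (hP0 : P ≠ 0) {c : ℝ}
    (hPQP : P * Q * P = c • P) (hQPQ : Q * P * Q = c • Q) : ‖P - Q‖ ^ 2 = 1 - c := by
  have hc : |c| ≤ 1 := by
    refine le_of_mul_le_mul_right ?_ (norm_pos_iff.mpr hP0)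
    calc |c| * ‖P‖ = ‖P * Q * P‖ := by rw [hPQP, norm_smul, Real.norm_eq_abs]
      _ ≤ ‖P‖ * ‖Q‖ * ‖P‖ := norm_mul₃_le
      _ ≤ 1 * 1 * ‖P‖ := by
        gcongr
        · exact IsStarProjection.norm_le P hP
        · exact IsStarProjection.norm_le Q hQ
      _ = 1 * ‖P‖ := by rw [one_mul]
  rcases eq_or_ne P Q with rfl | hPQ
  · have : (1 - c) • P = 0 := by
      rw [sub_smul, one_smul, ← hPQP, hP.isIdempotentElem.eq, hP.isIdempotentElem.eq, sub_self]
    rw [(smul_eq_zero.mp this).resolve_right hP0, sub_self, norm_zero]; norm_num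
  · exact (hP.isSelfAdjoint.sub hQ.isSelfAdjoint).norm_sq_eq_of_pow_three_eq_smul
      (sub_ne_zero.mpr hPQ) (sub_nonneg.mpr (le_of_abs_le hc))
      (hP.isIdempotentElem.sub_pow_three hQ.isIdempotentElem hPQP hQPQ)

end CStarRing

namespace Matrix

variable {m K : Type*} [Fintype m] [Field K]

theorem smul_vecMulVec_self_mul_mul (x y : m → K) (r : K) :
    r⁻¹ • vecMulVec x x * (r⁻¹ • vecMulVec y y) * (r⁻¹ • vecMulVec x x)
      = (x ⬝ᵥ y / r) ^ 2 • (r⁻¹ • vecMulVec x x) := by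
  simp only [smul_mul_smul, vecMulVec_mul_vecMulVec, dotProduct_comm y x, vecMulVec_smul,
    smul_smul]
  congr 1
  ring

theorem isStarProjection_smul_vecMulVec_self [StarRing K] [TrivialStar K] {x : m → K} {r : K}
    (hx : x ⬝ᵥ x = r) (hr : r ≠ 0) : IsStarProjection (r⁻¹ • vecMulVec x x) where
  isIdempotentElem := by
    rw [IsIdempotentElem, smul_mul_smul, vecMulVec_mul_vecMulVec, hx, vecMulVec_smul, smul_smul,
      inv_mul_cancel_right₀ hr]
  isSelfAdjoint := by
    rw [IsSelfAdjoint, star_smul, star_trivial, star_eq_conjTranspose, conjTranspose_vecMulVec,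
      star_trivial]

theorem smul_vecMulVec_self_ne_zero {x : m → K} {r : K} (hx : x ⬝ᵥ x = r) (hr : r ≠ 0) :
    r⁻¹ • vecMulVec x x ≠ 0 := by
  intro h
  have := congrArg trace h
  rw [trace_smul, trace_vecMulVec, hx, smul_eq_mul, inv_mul_cancel₀ hr, trace_zero] at this
  exact one_ne_zero this

end Matrix

theorem EuclideanSpace.real_inner_eq_dotProduct {ι : Type*} [Fintype ι]
    (x y : EuclideanSpace ℝ ι) : inner ℝ x y = x.ofLp ⬝ᵥ y.ofLp := by
  rw [EuclideanSpace.inner_eq_star_dotProduct, star_trivial, dotProduct_comm]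

theorem stmt1_general (n : ℕ) (hn : 1 ≤ n) (u w : EuclideanSpace ℝ (Fin n))
    (hu : ‖u‖ = Real.sqrt n) (hw : ‖w‖ = Real.sqrt n)
    (s : ℝ) (hs : s = 1 ∨ s = -1) :
    (l2OpNorm ((n : ℝ)⁻¹ • Matrix.vecMulVec w w - (n : ℝ)⁻¹ • Matrix.vecMulVec u u)) ^ 2
      = (‖w - s • u‖ ^ 2 / n) * (1 - (‖w - s • u‖ ^ 2 / n) / 4) := by
  have hn0 : (n : ℝ) ≠ 0 := by positivity
  have hdot_self {x : EuclideanSpace ℝ (Fin n)} (hx : ‖x‖ = Real.sqrt n) :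
      x.ofLp ⬝ᵥ x.ofLp = n := by
    rw [← EuclideanSpace.real_inner_eq_dotProduct, real_inner_self_eq_norm_sq, hx,
      Real.sq_sqrt n.cast_nonneg]
  have hs2 : s ^ 2 = 1 := by rcases hs with rfl | rfl <;> norm_num
  have hloss : ‖w - s • u‖ ^ 2 = 2 * n - 2 * s * (w.ofLp ⬝ᵥ u.ofLp) := by
    rw [norm_sub_sq_real, inner_smul_right, EuclideanSpace.real_inner_eq_dotProduct, norm_smul,
      mul_pow, Real.norm_eq_abs, sq_abs, hs2, hw, hu, Real.sq_sqrt n.cast_nonneg]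
    ring
  -- `l2OpNorm A` is definitionally the norm of the C⋆-algebra `Matrix.Norms.L2Operator`.
  have hproj : l2OpNorm ((n : ℝ)⁻¹ • vecMulVec w w - (n : ℝ)⁻¹ • vecMulVec u u) ^ 2
      = 1 - (w.ofLp ⬝ᵥ u.ofLp / n) ^ 2 :=
    IsStarProjection.norm_sub_sq (isStarProjection_smul_vecMulVec_self (hdot_self hw) hn0)
      (isStarProjection_smul_vecMulVec_self (hdot_self hu) hn0)
      (smul_vecMulVec_self_ne_zero (hdot_self hw) hn0) (smul_vecMulVec_self_mul_mul _ _ _)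
      (by rw [smul_vecMulVec_self_mul_mul, dotProduct_comm])
  rw [hproj, hloss]
  field_simp
  linear_combination (4 * (w.ofLp ⬝ᵥ u.ofLp) ^ 2) * hs2

theorem stmt1 (n : ℕ) (hn : 1 ≤ n) (u w : EuclideanSpace ℝ (Fin n))
    (hu : ‖u‖ = Real.sqrt n) (hw : ‖w‖ = Real.sqrt n)
    (s : ℝ) (hs : s = 1 ∨ s = -1) (hsign : 0 ≤ s * ∑ i, w i * u i) :
    (l2OpNorm ((n : ℝ)⁻¹ • Matrix.vecMulVec w w - (n : ℝ)⁻¹ • Matrix.vecMulVec u u)) ^ 2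
      = (‖w - s • u‖ ^ 2 / n) * (1 - (‖w - s • u‖ ^ 2 / n) / 4) :=
  stmt1_general n hn u w hu hw s hs
end

section
/- Let n ≥ 1, p ≥ 0, and fix y ∈ ℝⁿ, X ∈ ℝⁿˣᵖ, β_x ∈ ℝᵖ, real numbers β_u, β_v, d, λ with λ ≥ 0 and β_u² + λ d² > 0, a matrix A ∈ ℝⁿˣⁿ, and v ∈ ℝⁿ with ‖v‖₂² = n. Define f(u) = (1/n)‖y − Xβ_x − u β_u − v β_v‖₂² + (λ/n²)‖A − d u vᵀ‖_F² for u ∈ ℝⁿ. Then the vector u* = (β_u² + λ d²)⁻¹ · [ β_u (y − Xβ_x − v β_v) + (λ d / n) A v ] is the unique global minimizer of f over ℝⁿ; that is, f(u) ≥ f(u*) for all u ∈ ℝⁿ, with equality if and only if u = u*. -/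
/-!
Both terms of `f` are separable in the coordinates of `u`, and since `‖v‖₂² = n` the `i`-th
coordinate enters through the quadratic `((βu² + λ d²) / n) t² - 2 Bᵢ t + Cᵢ`. Its leading
coefficient is positive and `u*ᵢ` is its vertex, so completing the square gives
`f u = f u* + ((βu² + λ d²) / n) ‖u - u*‖₂²`.
-/

open Finset

lemma sum_sub_mul_sq {ι : Type*} [Fintype ι] (a w : ι → ℝ) (t : ℝ) :
    ∑ j, (a j - t * w j) ^ 2
      = ∑ j, a j ^ 2 - 2 * t * ∑ j, a j * w j + t ^ 2 * ∑ j, w j ^ 2 := by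
  simp only [mul_sum, ← sum_sub_distrib, ← sum_add_distrib]
  exact sum_congr rfl fun j _ => by ring

lemma sum_quadratic_eq_add_sum_sq {ι : Type*} [Fintype ι] {a : ℝ} {b s : ι → ℝ}
    (hs : ∀ i, a * s i = b i) (c u : ι → ℝ) :
    ∑ i, (a * u i ^ 2 - 2 * b i * u i + c i)
      = ∑ i, (a * s i ^ 2 - 2 * b i * s i + c i) + a * ∑ i, (u i - s i) ^ 2 := by
  rw [mul_sum, ← sum_add_distrib]
  exact sum_congr rfl fun i _ => by linear_combination (2 * (u i - s i)) * hs i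

lemma le_and_eq_iff_of_eq_add_sum_sq {ι : Type*} [Fintype ι] {f : (ι → ℝ) → ℝ} {s : ι → ℝ}
    {c : ℝ} (hc : 0 < c) (hf : ∀ u, f u = f s + c * ∑ i, (u i - s i) ^ 2) (u : ι → ℝ) :
    f s ≤ f u ∧ (f u = f s ↔ u = s) := by
  have hsum : 0 ≤ ∑ i, (u i - s i) ^ 2 := sum_nonneg fun i _ => sq_nonneg _
  refine ⟨by nlinarith [hf u], ⟨fun h => ?_, fun h => h ▸ rfl⟩⟩
  have hzero : ∑ i, (u i - s i) ^ 2 = 0 := by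
    rw [hf u, add_eq_left, mul_eq_zero] at h
    exact h.resolve_left hc.ne'
  funext i
  have := (sum_eq_zero_iff_of_nonneg fun i _ => sq_nonneg (u i - s i)).mp hzero i (mem_univ i)
  exact sub_eq_zero.mp (pow_eq_zero_iff two_ne_zero |>.mp this)

theorem stmt6_general (n p : ℕ) (hn : 1 ≤ n)
    (y : Fin n → ℝ) (X : Matrix (Fin n) (Fin p) ℝ) (βx : Fin p → ℝ)
    (βu βv d lam : ℝ) (hpos : 0 < βu ^ 2 + lam * d ^ 2)
    (A : Matrix (Fin n) (Fin n) ℝ)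
    (v : Fin n → ℝ) (hv : ∑ i, (v i) ^ 2 = (n : ℝ)) :
    let f : (Fin n → ℝ) → ℝ := fun u =>
      (1 / (n : ℝ)) * ∑ i, (y i - X.mulVec βx i - u i * βu - v i * βv) ^ 2
        + (lam / (n : ℝ) ^ 2) * ∑ i, ∑ j, (A i j - d * u i * v j) ^ 2
    let ustar : Fin n → ℝ := fun i =>
      (βu ^ 2 + lam * d ^ 2)⁻¹ *
        (βu * (y i - X.mulVec βx i - v i * βv) + (lam * d / (n : ℝ)) * A.mulVec v i)
    ∀ u : Fin n → ℝ, f ustar ≤ f u ∧ (f u = f ustar ↔ u = ustar) := by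
  intro f ustar
  have hn₀ : (n : ℝ) ≠ 0 := by positivity
  set r : Fin n → ℝ := fun i => y i - X.mulVec βx i - v i * βv
  set b : Fin n → ℝ := fun i => βu * r i / n + lam * d * A.mulVec v i / n ^ 2
  set c : Fin n → ℝ := fun i => r i ^ 2 / n + lam / n ^ 2 * ∑ j, A i j ^ 2
  have hquad : ∀ u, f u = ∑ i, ((βu ^ 2 + lam * d ^ 2) / n * u i ^ 2 - 2 * b i * u i + c i) := by
    intro u
    simp only [f]
    rw [mul_sum, mul_sum, ← sum_add_distrib]
    refine sum_congr rfl fun i _ => ?_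
    rw [sum_sub_mul_sq, hv]
    simp only [b, c, r, Matrix.mulVec, dotProduct]
    field_simp
    ring
  have hvertex : ∀ i, (βu ^ 2 + lam * d ^ 2) / n * ustar i = b i := by
    intro i
    simp only [ustar, b, r]
    field_simp
  have hcoeff : 0 < (βu ^ 2 + lam * d ^ 2) / n := by positivity
  refine le_and_eq_iff_of_eq_add_sum_sq hcoeff fun u => ?_
  rw [hquad u, hquad ustar]
  exact sum_quadratic_eq_add_sum_sq hvertex c u

theorem stmt6 (n p : ℕ) (hn : 1 ≤ n)
    (y : Fin n → ℝ) (X : Matrix (Fin n) (Fin p) ℝ) (βx : Fin p → ℝ)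
    (βu βv d lam : ℝ) (hlam : 0 ≤ lam) (hpos : 0 < βu ^ 2 + lam * d ^ 2)
    (A : Matrix (Fin n) (Fin n) ℝ)
    (v : Fin n → ℝ) (hv : ∑ i, (v i) ^ 2 = (n : ℝ)) :
    let f : (Fin n → ℝ) → ℝ := fun u =>
      (1 / (n : ℝ)) * ∑ i, (y i - X.mulVec βx i - u i * βu - v i * βv) ^ 2
        + (lam / (n : ℝ) ^ 2) * ∑ i, ∑ j, (A i j - d * u i * v j) ^ 2
    let ustar : Fin n → ℝ := fun i =>
      (βu ^ 2 + lam * d ^ 2)⁻¹ *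
        (βu * (y i - X.mulVec βx i - v i * βv) + (lam * d / (n : ℝ)) * A.mulVec v i)
    ∀ u : Fin n → ℝ, f ustar ≤ f u ∧ (f u = f ustar ↔ u = ustar) :=
  stmt6_general n p hn y X βx βu βv d lam hpos A v hv
end

section
/- Let n ≥ 1, p ≥ 0, and fix y ∈ ℝⁿ, X ∈ ℝⁿˣᵖ, β_x ∈ ℝᵖ, real numbers β_u, β_v, d, λ with λ ≥ 0 and β_v² + λ d² > 0, a matrix A ∈ ℝⁿˣⁿ, and u ∈ ℝⁿ with ‖u‖₂² = n. Define g(v) = (1/n)‖y − Xβ_x − u β_u − v β_v‖₂² + (λ/n²)‖A − d u vᵀ‖_F² for v ∈ ℝⁿ. Then the vector v* = (β_v² + λ d²)⁻¹ · [ β_v (y − Xβ_x − u β_u) + (λ d / n) Aᵀ u ] is the unique global minimizer of g over ℝⁿ; that is, g(v) ≥ g(v*) for all v ∈ ℝⁿ, with equality if and only if v = v*. -/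
theorem stmt7 (n p : ℕ) (hn : 1 ≤ n)
    (y : Fin n → ℝ) (X : Matrix (Fin n) (Fin p) ℝ) (βx : Fin p → ℝ)
    (βu βv d lam : ℝ) (hlam : 0 ≤ lam) (hpos : 0 < βv ^ 2 + lam * d ^ 2)
    (A : Matrix (Fin n) (Fin n) ℝ)
    (u : Fin n → ℝ) (hu : ∑ i, (u i) ^ 2 = (n : ℝ)) :
    let g : (Fin n → ℝ) → ℝ := fun v =>
      (1 / (n : ℝ)) * ∑ i, (y i - X.mulVec βx i - u i * βu - v i * βv) ^ 2
        + (lam / (n : ℝ) ^ 2) * ∑ i, ∑ j, (A i j - d * u i * v j) ^ 2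
    let vstar : Fin n → ℝ := fun i =>
      (βv ^ 2 + lam * d ^ 2)⁻¹ *
        (βv * (y i - X.mulVec βx i - u i * βu) + (lam * d / (n : ℝ)) * A.transpose.mulVec u i)
    ∀ v : Fin n → ℝ, g vstar ≤ g v ∧ (g v = g vstar ↔ v = vstar) := by
  intro g vstar v
  have hn0 : (0:ℝ) < (n:ℝ) := by exact_mod_cast Nat.lt_of_lt_of_le Nat.zero_lt_one hn
  have hnne : (n:ℝ) ≠ 0 := ne_of_gt hn0
  set c : ℝ := βv ^ 2 + lam * d ^ 2 with hc
  have hcne : c ≠ 0 := ne_of_gt hpos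
  set r : Fin n → ℝ := fun i => y i - X.mulVec βx i - u i * βu with hr
  set W : Fin n → ℝ := fun j => A.transpose.mulVec u j with hWdef
  have hW : ∀ j, W j = ∑ i, A i j * u i := by
    intro j
    simp [hWdef, Matrix.mulVec, dotProduct, Matrix.transpose_apply]
  have hvstar : ∀ j, c * vstar j = βv * r j + (lam * d / (n:ℝ)) * W j := by
    intro j
    show c * (c⁻¹ * _) = _
    rw [← mul_assoc, mul_inv_cancel₀ hcne, one_mul]
  -- first sum expansion
  have hR : ∀ t : Fin n → ℝ, ∑ i, (r i - t i * βv) ^ 2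
      = ∑ i, r i ^ 2 - 2 * βv * ∑ i, r i * t i + βv ^ 2 * ∑ i, t i ^ 2 := by
    intro t
    rw [Finset.mul_sum, Finset.mul_sum, ← Finset.sum_sub_distrib, ← Finset.sum_add_distrib]
    exact Finset.sum_congr rfl fun i _ => by ring
  -- second (double) sum expansion
  have hA : ∀ t : Fin n → ℝ, ∑ i, ∑ j, (A i j - d * u i * t j) ^ 2
      = ∑ i, ∑ j, (A i j) ^ 2 - 2 * d * ∑ j, W j * t j
        + d ^ 2 * (n:ℝ) * ∑ j, t j ^ 2 := by
    intro t
    have e1 : ∀ i j, (A i j - d * u i * t j) ^ 2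
        = (A i j) ^ 2 - 2 * d * (A i j * u i * t j) + d ^ 2 * (u i ^ 2 * t j ^ 2) :=
      fun i j => by ring
    have h2 : ∑ i, ∑ j, (A i j * u i * t j) = ∑ j, W j * t j := by
      rw [Finset.sum_comm]
      refine Finset.sum_congr rfl fun j _ => ?_
      rw [hW, Finset.sum_mul]
    have h3 : ∑ i, ∑ j, (u i ^ 2 * t j ^ 2) = (n:ℝ) * ∑ j, t j ^ 2 := by
      rw [← hu, Finset.sum_mul]
      exact Finset.sum_congr rfl fun i _ => by rw [Finset.mul_sum]
    calc ∑ i, ∑ j, (A i j - d * u i * t j) ^ 2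
        = ∑ i, ∑ j, ((A i j) ^ 2 - 2 * d * (A i j * u i * t j) + d ^ 2 * (u i ^ 2 * t j ^ 2)) :=
          Finset.sum_congr rfl fun i _ => Finset.sum_congr rfl fun j _ => e1 i j
      _ = ∑ i, (∑ j, (A i j) ^ 2 - 2 * d * ∑ j, (A i j * u i * t j)
            + d ^ 2 * ∑ j, (u i ^ 2 * t j ^ 2)) := by
          refine Finset.sum_congr rfl fun i _ => ?_
          rw [Finset.mul_sum, Finset.mul_sum, ← Finset.sum_sub_distrib, ← Finset.sum_add_distrib]
      _ = ∑ i, ∑ j, (A i j) ^ 2 - 2 * d * ∑ i, ∑ j, (A i j * u i * t j)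
            + d ^ 2 * ∑ i, ∑ j, (u i ^ 2 * t j ^ 2) := by
          rw [Finset.mul_sum, Finset.mul_sum, ← Finset.sum_sub_distrib, ← Finset.sum_add_distrib]
      _ = ∑ i, ∑ j, (A i j) ^ 2 - 2 * d * ∑ j, W j * t j
            + d ^ 2 * ((n:ℝ) * ∑ j, t j ^ 2) := by rw [h2, h3]
      _ = _ := by ring
  -- g in canonical quadratic form
  have hg : ∀ t : Fin n → ℝ, g t
      = (1 / (n:ℝ)) * ∑ i, r i ^ 2 + (lam / (n:ℝ) ^ 2) * ∑ i, ∑ j, (A i j) ^ 2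
        + (c / (n:ℝ)) * ∑ j, t j ^ 2 - (2 / (n:ℝ)) * (c * ∑ j, vstar j * t j) := by
    intro t
    have hsum : c * ∑ j, vstar j * t j
        = βv * ∑ j, r j * t j + (lam * d / (n:ℝ)) * ∑ j, W j * t j := by
      rw [Finset.mul_sum, Finset.mul_sum, Finset.mul_sum, ← Finset.sum_add_distrib]
      refine Finset.sum_congr rfl fun j _ => ?_
      rw [← mul_assoc, hvstar j]
      ring
    have hgt : g t = (1 / (n:ℝ)) * ∑ i, (r i - t i * βv) ^ 2
        + (lam / (n:ℝ) ^ 2) * ∑ i, ∑ j, (A i j - d * u i * t j) ^ 2 := rfl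
    rw [hgt, hR t, hA t, hsum, hc]
    field_simp
    ring
  -- the key identity
  have key : ∀ t : Fin n → ℝ, g t = g vstar + (c / (n:ℝ)) * ∑ j, (t j - vstar j) ^ 2 := by
    intro t
    have hsq : ∑ j, (t j - vstar j) ^ 2
        = ∑ j, t j ^ 2 - 2 * ∑ j, vstar j * t j + ∑ j, vstar j ^ 2 := by
      rw [Finset.mul_sum, ← Finset.sum_sub_distrib, ← Finset.sum_add_distrib]
      exact Finset.sum_congr rfl fun j _ => by ring
    have hvv : ∑ j, vstar j * vstar j = ∑ j, vstar j ^ 2 :=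
      Finset.sum_congr rfl fun j _ => (sq (vstar j)).symm
    rw [hg t, hg vstar, hsq, hvv]
    ring
  have hsum_nonneg : (0:ℝ) ≤ ∑ j, (v j - vstar j) ^ 2 :=
    Finset.sum_nonneg fun j _ => sq_nonneg _
  have hcn : (0:ℝ) < c / (n:ℝ) := div_pos hpos hn0
  constructor
  · rw [key v]
    nlinarith [mul_nonneg (le_of_lt hcn) hsum_nonneg]
  · constructor
    · intro h
      rw [key v] at h
      have h0 : (c / (n:ℝ)) * ∑ j, (v j - vstar j) ^ 2 = 0 := by linarith
      have hs0 : ∑ j, (v j - vstar j) ^ 2 = 0 := by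
        rcases mul_eq_zero.mp h0 with h' | h'
        · exact absurd h' (ne_of_gt hcn)
        · exact h'
      funext j
      have := (Finset.sum_eq_zero_iff_of_nonneg (fun j _ => sq_nonneg (v j - vstar j))).mp hs0
        j (Finset.mem_univ j)
      have := pow_eq_zero_iff (n := 2) (by norm_num) |>.mp this
      linarith [sub_eq_zero.mp this]
    · intro h; rw [h]
end

section
/- Let d > 0, σ_a > 0, σ_y ≥ 0 be real numbers, let n ≥ 1 be an integer, and let β_u, β_v ∈ ℝ with β_u² + β_v² > 0. Define, for λ ≥ 0, δ(λ) = [ ((2λd² + β_u² + β_v²)/(d²n))·σ_a² − σ_y² ] / (λd² + β_u² + β_v²)². Then λ₀ = n σ_y² / σ_a² satisfies δ(λ) ≤ δ(λ₀) for every λ ≥ 0, with equality if and only if λ = λ₀; that is, λ₀ is the unique maximizer of δ over [0, ∞). -/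
/-!
Put `x = λ d² + b` and `c = λ₀ d² + b`, where `b = β_u² + β_v²`. Since `σ_y² = λ₀ σ_a² / n`, the
function is `δ(λ) = σ_a² / (d² n) · (2x - c) / x²`, and `1/c - (2x - c)/x² = (x - c)²/(c x²)`:
the tangent line of `1/x` at `c` lies below the convex function, touching only at `x = c`.
-/

lemma inv_sub_two_mul_sub_div_sq {x c : ℝ} (hx : x ≠ 0) (hc : c ≠ 0) :
    c⁻¹ - (2 * x - c) / x ^ 2 = (x - c) ^ 2 / (c * x ^ 2) := by
  field_simp
  ring

lemma two_mul_sub_div_sq_le_inv {x c : ℝ} (hx : x ≠ 0) (hc : 0 < c) :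
    (2 * x - c) / x ^ 2 ≤ c⁻¹ := by
  have := inv_sub_two_mul_sub_div_sq hx hc.ne'
  have : 0 ≤ (x - c) ^ 2 / (c * x ^ 2) := by positivity
  linarith

lemma two_mul_sub_div_sq_eq_inv_iff {x c : ℝ} (hx : x ≠ 0) (hc : c ≠ 0) :
    (2 * x - c) / x ^ 2 = c⁻¹ ↔ x = c := by
  rw [eq_comm, ← sub_eq_zero, inv_sub_two_mul_sub_div_sq hx hc, div_eq_zero_iff,
    or_iff_left (by positivity), sq_eq_zero_iff, sub_eq_zero]

lemma delta_eq_mul_two_mul_sub_div_sq {d σa σy N b : ℝ} (hd : d ≠ 0) (hσa : σa ≠ 0) (hN : N ≠ 0)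
    (lam : ℝ) :
    (((2 * lam * d ^ 2 + b) / (d ^ 2 * N)) * σa ^ 2 - σy ^ 2) / (lam * d ^ 2 + b) ^ 2 =
      σa ^ 2 / (d ^ 2 * N) *
        ((2 * (lam * d ^ 2 + b) - (N * σy ^ 2 / σa ^ 2 * d ^ 2 + b)) / (lam * d ^ 2 + b) ^ 2) := by
  field_simp
  ring

theorem stmt8_general (d σa σy : ℝ) (hd : 0 < d) (hσa : 0 < σa)
    (n : ℕ) (hn : 1 ≤ n) (βu βv : ℝ) (hβ : 0 < βu ^ 2 + βv ^ 2) :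
    let δ : ℝ → ℝ := fun lam =>
      (((2 * lam * d ^ 2 + βu ^ 2 + βv ^ 2) / (d ^ 2 * n)) * σa ^ 2 - σy ^ 2) /
        (lam * d ^ 2 + βu ^ 2 + βv ^ 2) ^ 2
    let lam0 : ℝ := n * σy ^ 2 / σa ^ 2
    ∀ lam : ℝ, 0 ≤ lam → δ lam ≤ δ lam0 ∧ (δ lam = δ lam0 ↔ lam = lam0) := by
  intro δ lam0 lam hlam
  set b := βu ^ 2 + βv ^ 2
  have hN : (0 : ℝ) < n := by exact_mod_cast hn
  have hK : 0 < σa ^ 2 / (d ^ 2 * n) := by positivity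
  have hδ : ∀ t, δ t = σa ^ 2 / (d ^ 2 * n) *
      ((2 * (t * d ^ 2 + b) - (lam0 * d ^ 2 + b)) / (t * d ^ 2 + b) ^ 2) := fun t => by
    simp only [δ, add_assoc]
    exact delta_eq_mul_two_mul_sub_div_sq hd.ne' hσa.ne' hN.ne' t
  have hc : 0 < lam0 * d ^ 2 + b := by positivity
  have hx : 0 < lam * d ^ 2 + b := by positivity
  have hδ0 : δ lam0 = σa ^ 2 / (d ^ 2 * n) * (lam0 * d ^ 2 + b)⁻¹ := by
    rw [hδ]
    field_simp
    ring
  rw [hδ0, hδ, mul_right_inj' hK.ne', two_mul_sub_div_sq_eq_inv_iff hx.ne' hc.ne', add_left_inj,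
    mul_left_inj' (by positivity)]
  exact ⟨mul_le_mul_of_nonneg_left (two_mul_sub_div_sq_le_inv hx.ne' hc) hK.le, Iff.rfl⟩

theorem stmt8 (d σa σy : ℝ) (hd : 0 < d) (hσa : 0 < σa) (hσy : 0 ≤ σy)
    (n : ℕ) (hn : 1 ≤ n) (βu βv : ℝ) (hβ : 0 < βu ^ 2 + βv ^ 2) :
    let δ : ℝ → ℝ := fun lam =>
      (((2 * lam * d ^ 2 + βu ^ 2 + βv ^ 2) / (d ^ 2 * n)) * σa ^ 2 - σy ^ 2) /
        (lam * d ^ 2 + βu ^ 2 + βv ^ 2) ^ 2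
    let lam0 : ℝ := n * σy ^ 2 / σa ^ 2
    ∀ lam : ℝ, 0 ≤ lam → δ lam ≤ δ lam0 ∧ (δ lam = δ lam0 ↔ lam = lam0) :=
  stmt8_general d σa σy hd hσa n hn βu βv hβ
end

section
/- Let d > 0, σ_a > 0, σ_y > 0 be real numbers, let n ≥ 1 be an integer, and let β_u, β_v ∈ ℝ. Set κ = σ_a² / (d² n), λ₀ = n σ_y² / σ_a², and δ(λ) = [ ((2λd² + β_u² + β_v²)/(d²n))·σ_a² − σ_y² ] / (λd² + β_u² + β_v²)². Then δ(λ₀) = κ² / (σ_y² + κ(β_u² + β_v²)), and consequently κ − β_u² δ(λ₀) = κ (σ_y² + κ β_v²) / (σ_y² + κ(β_u² + β_v²)); in particular, if β_u ≠ 0 then κ − β_u² δ(λ₀) < κ, so the SuperCENT rate for estimating u at the optimal tuning parameter is strictly smaller than the two-stage rate κ. -/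
theorem stmt9 (d σa σy : ℝ) (hd : 0 < d) (hσa : 0 < σa) (hσy : 0 < σy)
    (n : ℕ) (hn : 1 ≤ n) (βu βv : ℝ) :
    let κ : ℝ := σa ^ 2 / (d ^ 2 * n)
    let lam0 : ℝ := n * σy ^ 2 / σa ^ 2
    let δ : ℝ → ℝ := fun lam =>
      (((2 * lam * d ^ 2 + βu ^ 2 + βv ^ 2) / (d ^ 2 * n)) * σa ^ 2 - σy ^ 2) /
        (lam * d ^ 2 + βu ^ 2 + βv ^ 2) ^ 2
    δ lam0 = κ ^ 2 / (σy ^ 2 + κ * (βu ^ 2 + βv ^ 2)) ∧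
    κ - βu ^ 2 * δ lam0 = κ * (σy ^ 2 + κ * βv ^ 2) / (σy ^ 2 + κ * (βu ^ 2 + βv ^ 2)) ∧
    (βu ≠ 0 → κ - βu ^ 2 * δ lam0 < κ) := by
  intro κ lam0 δ
  have hn' : (0:ℝ) < n := by exact_mod_cast Nat.lt_of_lt_of_le Nat.zero_lt_one hn
  have hκ : 0 < κ := div_pos (pow_pos hσa 2) (mul_pos (pow_pos hd 2) hn')
  have hB : 0 ≤ βu ^ 2 + βv ^ 2 := by positivity
  have hden : 0 < σy ^ 2 + κ * (βu ^ 2 + βv ^ 2) := by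
    have := mul_nonneg hκ.le hB
    nlinarith [pow_pos hσy 2]
  have hlamden : lam0 * d ^ 2 + βu ^ 2 + βv ^ 2 > 0 := by
    have : lam0 * d ^ 2 > 0 := by
      apply mul_pos _ (pow_pos hd 2)
      exact div_pos (mul_pos hn' (pow_pos hσy 2)) (pow_pos hσa 2)
    linarith
  have h1 : δ lam0 = κ ^ 2 / (σy ^ 2 + κ * (βu ^ 2 + βv ^ 2)) := by
    show (((2 * lam0 * d ^ 2 + βu ^ 2 + βv ^ 2) / (d ^ 2 * n)) * σa ^ 2 - σy ^ 2) /
        (lam0 * d ^ 2 + βu ^ 2 + βv ^ 2) ^ 2 = _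
    unfold κ lam0
    unfold lam0 at hlamden
    field_simp
    ring
  refine ⟨h1, ?_, ?_⟩
  · rw [h1]
    field_simp
    ring
  · intro hβu
    rw [h1]
    have : 0 < βu ^ 2 * (κ ^ 2 / (σy ^ 2 + κ * (βu ^ 2 + βv ^ 2))) := by
      apply mul_pos (by positivity)
      exact div_pos (pow_pos hκ 2) hden
    linarith
end

section
/- Let d > 0, σ_a > 0, σ_y > 0 be real numbers, let n ≥ 1 be an integer, and let β_u, β_v ∈ ℝ. Set κ = σ_a² / (d² n), λ₀ = n σ_y² / σ_a², and δ(λ) = [ ((2λd² + β_u² + β_v²)/(d²n))·σ_a² − σ_y² ] / (λd² + β_u² + β_v²)². Then κ − (β_u² + β_v²) δ(λ₀) = κ σ_y² / (σ_y² + κ(β_u² + β_v²)) = κ / (1 + κ(β_u²/σ_y² + β_v²/σ_y²)); in particular, if β_u² + β_v² > 0 then κ − (β_u² + β_v²) δ(λ₀) < κ, so the SuperCENT rate for estimating the true network A₀ = d u vᵀ at the optimal tuning parameter is strictly smaller than the two-stage rate κ. -/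
theorem stmt10 (d σa σy : ℝ) (hd : 0 < d) (hσa : 0 < σa) (hσy : 0 < σy)
    (n : ℕ) (hn : 1 ≤ n) (βu βv : ℝ) :
    let κ : ℝ := σa ^ 2 / (d ^ 2 * n)
    let lam0 : ℝ := n * σy ^ 2 / σa ^ 2
    let δ : ℝ → ℝ := fun lam =>
      (((2 * lam * d ^ 2 + βu ^ 2 + βv ^ 2) / (d ^ 2 * n)) * σa ^ 2 - σy ^ 2) /
        (lam * d ^ 2 + βu ^ 2 + βv ^ 2) ^ 2
    κ - (βu ^ 2 + βv ^ 2) * δ lam0 = κ * σy ^ 2 / (σy ^ 2 + κ * (βu ^ 2 + βv ^ 2)) ∧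
    κ - (βu ^ 2 + βv ^ 2) * δ lam0 = κ / (1 + κ * (βu ^ 2 / σy ^ 2 + βv ^ 2 / σy ^ 2)) ∧
    (0 < βu ^ 2 + βv ^ 2 → κ - (βu ^ 2 + βv ^ 2) * δ lam0 < κ) := by
  intro κ lam0 δ
  have hn' : (0:ℝ) < n := by exact_mod_cast Nat.lt_of_lt_of_le Nat.zero_lt_one hn
  have hd2 : (0:ℝ) < d ^ 2 := by positivity
  have hσa2 : (0:ℝ) < σa ^ 2 := by positivity
  have hσy2 : (0:ℝ) < σy ^ 2 := by positivity
  have hb : (0:ℝ) ≤ βu ^ 2 + βv ^ 2 := by positivity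
  have hκ : 0 < κ := by unfold κ; positivity
  have hden : 0 < lam0 * d ^ 2 + (βu ^ 2 + βv ^ 2) := by
    have : 0 < lam0 * d ^ 2 := by
      unfold lam0; positivity
    linarith
  have hden2 : 0 < σy ^ 2 + κ * (βu ^ 2 + βv ^ 2) := by positivity
  have h1 : κ - (βu ^ 2 + βv ^ 2) * δ lam0 = κ * σy ^ 2 / (σy ^ 2 + κ * (βu ^ 2 + βv ^ 2)) := by
    show κ - (βu ^ 2 + βv ^ 2) *
        ((((2 * lam0 * d ^ 2 + βu ^ 2 + βv ^ 2) / (d ^ 2 * n)) * σa ^ 2 - σy ^ 2) /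
          (lam0 * d ^ 2 + βu ^ 2 + βv ^ 2) ^ 2) = _
    unfold κ lam0
    unfold lam0 at hden
    field_simp
    ring
  refine ⟨h1, ?_, ?_⟩
  · rw [h1]
    rw [div_eq_div_iff hden2.ne' (by positivity)]
    field_simp
  · intro hbpos
    rw [h1]
    rw [div_lt_iff₀ hden2]
    nlinarith [mul_pos hκ hbpos]
end

section
/- Let κ > 0, 0 ≤ ρ < 1, and β_u, β_v ∈ ℝ, and define b_u = ((1+κ−ρ²)β_u + κρβ_v) / ((1+κ)² − ρ²). Then b_u − β_u = −κ·[(1+κ)β_u − ρβ_v] / ((1+κ)² − ρ²). Consequently, since (1+κ)² − ρ² > 0: b_u < β_u if and only if β_u > ρβ_v/(1+κ), and b_u > β_u if and only if β_u < ρβ_v/(1+κ). In particular, if ρ = 0 then b_u = β_u/(1+κ), so the limit is attenuated toward zero by the factor 1/(1+κ). -/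
theorem stmt14 (κ ρ βu βv : ℝ) (hκ : 0 < κ) (hρ0 : 0 ≤ ρ) (hρ1 : ρ < 1) :
    let bu : ℝ := ((1 + κ - ρ ^ 2) * βu + κ * ρ * βv) / ((1 + κ) ^ 2 - ρ ^ 2)
    bu - βu = -(κ * ((1 + κ) * βu - ρ * βv)) / ((1 + κ) ^ 2 - ρ ^ 2) ∧
    0 < (1 + κ) ^ 2 - ρ ^ 2 ∧
    (bu < βu ↔ ρ * βv / (1 + κ) < βu) ∧
    (βu < bu ↔ βu < ρ * βv / (1 + κ)) ∧
    (ρ = 0 → bu = βu / (1 + κ)) := by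
  intro bu
  have h1κ : (0:ℝ) < 1 + κ := by linarith
  have hD : 0 < (1 + κ) ^ 2 - ρ ^ 2 := by nlinarith
  have hDne : ((1 + κ) ^ 2 - ρ ^ 2) ≠ 0 := ne_of_gt hD
  have hdiff : bu - βu = -(κ * ((1 + κ) * βu - ρ * βv)) / ((1 + κ) ^ 2 - ρ ^ 2) := by
    show ((1 + κ - ρ ^ 2) * βu + κ * ρ * βv) / ((1 + κ) ^ 2 - ρ ^ 2) - βu = _
    field_simp
    ring
  refine ⟨hdiff, hD, ?_, ?_, ?_⟩
  · rw [show (bu < βu) ↔ (bu - βu < 0) by constructor <;> intro <;> linarith, hdiff,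
      div_lt_iff₀ hD, div_lt_iff₀ h1κ]
    constructor <;> intro h <;> nlinarith
  · rw [show (βu < bu) ↔ (0 < bu - βu) by constructor <;> intro <;> linarith, hdiff,
      lt_div_iff₀ hD, lt_div_iff₀ h1κ]
    constructor <;> intro h <;> nlinarith
  · intro h
    show ((1 + κ - ρ ^ 2) * βu + κ * ρ * βv) / ((1 + κ) ^ 2 - ρ ^ 2) = βu / (1 + κ)
    subst h
    rw [div_eq_div_iff hDne (ne_of_gt h1κ)]
    ring
end
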